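/- arXiv:1911.10850 — 5 statements merged into one kernel-verified Lean document; each statement's English description precedes it below -/
import Mathlib

section
/- Let K ⊆ ℝⁿ be a closed cone and let x̄ ∈ ℝⁿ. If x* is a Fréchet (regular) subgradient of the distance function d_K at x̄, then x* is a limiting (Mordukhovich) subgradient of d_K at 0. In particular, every regular subgradient of d_K at any point belongs to ∂d_K(0). -/
open scoped RealInnerProductSpace Topology ENNReal
open Filter MeasureTheory Pointwise Metric

abbrev En (n : ℕ) := EuclideanSpace ℝ (Fin n)

/-- `K` is a cone: closed under multiplication by nonnegative scalars. -/
def IsConeSet {n : ℕ} (K : Set (En n)) : Prop :=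
  ∀ x ∈ K, ∀ l : ℝ, 0 ≤ l → l • x ∈ K

/-- The distance function to a set. -/
noncomputable def distFn {n : ℕ} (K : Set (En n)) (x : En n) : ℝ :=
  Metric.infDist x K

/-- `v` is a regular (Fréchet) subgradient of `f` at `x`. -/
def FSubgrad {n : ℕ} (f : En n → ℝ) (x v : En n) : Prop :=
  ∀ ε > (0:ℝ), ∃ δ > (0:ℝ), ∀ y : En n, ‖y - x‖ < δ →
    f y - f x - ⟪v, y - x⟫ ≥ -ε * ‖y - x‖

/-- `v` is a limiting (Mordukhovich) subgradient of `f` at `x`. -/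
def LimSubgrad {n : ℕ} (f : En n → ℝ) (x v : En n) : Prop :=
  ∃ xs vs : ℕ → En n, (∀ k, FSubgrad f (xs k) (vs k)) ∧
    Tendsto xs atTop (𝓝 x) ∧ Tendsto vs atTop (𝓝 v)

/-- `v` belongs to the regular (Fréchet) normal cone to `Θ` at `x`. -/
def RegNormal {n : ℕ} (Θ : Set (En n)) (x v : En n) : Prop :=
  ∀ ε > (0:ℝ), ∃ δ > (0:ℝ), ∀ y ∈ Θ, ‖y - x‖ < δ → ⟪v, y - x⟫ ≤ ε * ‖y - x‖

/-- The regular (Fréchet) normal cone as a set. -/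
def RegNCone {n : ℕ} (Θ : Set (En n)) (x : En n) : Set (En n) :=
  {v | RegNormal Θ x v}

/-- `v` belongs to the limiting (Mordukhovich) normal cone to `Θ` at `x`. -/
def LimNormal {n : ℕ} (Θ : Set (En n)) (x v : En n) : Prop :=
  ∃ xs vs : ℕ → En n, (∀ k, xs k ∈ Θ) ∧ (∀ k, RegNormal Θ (xs k) (vs k)) ∧
    Tendsto xs atTop (𝓝 x) ∧ Tendsto vs atTop (𝓝 v)

/-- The limiting normal cone as a set. -/
def LimNCone {n : ℕ} (Θ : Set (En n)) (x : En n) : Set (En n) :=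
  {v | LimNormal Θ x v}

/-- The contingent (Bouligand) tangent cone to `Θ` at `x`. -/
def TanCone {n : ℕ} (Θ : Set (En n)) (x : En n) : Set (En n) :=
  {v | ∃ (τ : ℕ → ℝ) (vs : ℕ → En n), (∀ k, 0 < τ k) ∧
    Tendsto τ atTop (𝓝 0) ∧ Tendsto vs atTop (𝓝 v) ∧ ∀ k, x + τ k • vs k ∈ Θ}

/-- A multifunction `M : Ω ⇉ ℝⁿ` is measurable: inverse images of open sets are measurable. -/
def MeasMulti {Ω : Type*} [MeasurableSpace Ω] {n : ℕ} (M : Ω → Set (En n)) : Prop :=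
  ∀ U : Set (En n), IsOpen U → MeasurableSet {ω | (M ω ∩ U).Nonempty}

/-- The essential intersection of a measurable multifunction. -/
def Minter {Ω : Type*} [MeasurableSpace Ω] (μ : Measure Ω) {n : ℕ} (M : Ω → Set (En n)) :
    Set (En n) :=
  {x | ∀ᵐ ω ∂μ, x ∈ M ω}

/-- The Aumann integral of a set-valued mapping. -/
noncomputable def AumannInt {Ω : Type*} [MeasurableSpace Ω] (μ : Measure Ω) {n : ℕ}
    (F : Ω → Set (En n)) : Set (En n) :=
  {y | ∃ g : Ω → En n, Integrable g μ ∧ (∀ᵐ ω ∂μ, g ω ∈ F ω) ∧ (∫ ω, g ω ∂μ) = y}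

lemma cone_smul_set {n : ℕ} {K : Set (En n)} (hK : IsConeSet K) {l : ℝ} (hl : 0 < l) :
    l • K = K := by
  ext x
  constructor
  · rintro ⟨u, hu, rfl⟩
    exact hK u hu l hl.le
  · intro hx
    exact ⟨l⁻¹ • x, hK x hx l⁻¹ (by positivity), by simp [smul_smul, mul_inv_cancel₀ hl.ne']⟩

lemma distFn_smul {n : ℕ} {K : Set (En n)} (hK : IsConeSet K) {l : ℝ} (hl : 0 < l)
    (x : En n) : distFn K (l • x) = l * distFn K x := by
  have := infDist_smul₀ (E := En n) (𝕜 := ℝ) hl.ne' K x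
  rw [cone_smul_set hK hl] at this
  simpa [distFn, Real.norm_eq_abs, abs_of_pos hl] using this

lemma FSubgrad_smul {n : ℕ} {K : Set (En n)} (hK : IsConeSet K) {l : ℝ} (hl : 0 < l)
    {x v : En n} (hv : FSubgrad (distFn K) x v) : FSubgrad (distFn K) (l • x) v := by
  intro ε hε
  obtain ⟨δ, hδ, h⟩ := hv ε hε
  refine ⟨l * δ, by positivity, fun y hy => ?_⟩
  have hz : ‖l⁻¹ • y - x‖ < δ := by
    have : l⁻¹ • y - x = l⁻¹ • (y - l • x) := by
      rw [smul_sub, smul_smul, inv_mul_cancel₀ hl.ne', one_smul]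
    rw [this, norm_smul, Real.norm_eq_abs, abs_of_pos (by positivity)]
    calc l⁻¹ * ‖y - l • x‖ < l⁻¹ * (l * δ) := by
          exact mul_lt_mul_of_pos_left hy (by positivity)
      _ = δ := by field_simp
  have key := h (l⁻¹ • y) hz
  have hy' : y = l • (l⁻¹ • y) := by rw [smul_smul, mul_inv_cancel₀ hl.ne', one_smul]
  have e1 : distFn K y = l * distFn K (l⁻¹ • y) := by
    conv_lhs => rw [hy']
    exact distFn_smul hK hl _
  have e2 : y - l • x = l • (l⁻¹ • y - x) := by
    rw [smul_sub]; rw [← hy']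
  rw [e1, distFn_smul hK hl x, e2, inner_smul_right, norm_smul, Real.norm_eq_abs,
    abs_of_pos hl]
  nlinarith [h (l⁻¹ • y) hz]

/-- every regular subgradient of the distance function of a closed cone
at any point is a limiting subgradient of it at the origin. -/
theorem regular_subgrad_distFn_mem_limiting_subdiff_at_zero {n : ℕ}
    (K : Set (En n)) (hKne : K.Nonempty) (hKcl : IsClosed K) (hKcone : IsConeSet K)
    (xbar v : En n) (hv : FSubgrad (distFn K) xbar v) :
    LimSubgrad (distFn K) 0 v := by
  refine ⟨fun k => ((k:ℝ)+1)⁻¹ • xbar, fun _ => v, fun k => ?_, ?_, tendsto_const_nhds⟩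
  · exact FSubgrad_smul hKcone (by positivity) hv
  · have h1 : Tendsto (fun k : ℕ => ((k:ℝ)+1)⁻¹) atTop (𝓝 0) :=
      tendsto_one_div_add_atTop_nhds_zero_nat.congr (fun k => by rw [one_div])
    simpa using h1.smul_const xbar
end

section
/- Let K ⊆ ℝⁿ be a closed cone and x̄ ∈ K. Then every vector in the regular (Fréchet) normal cone to K at x̄ belongs to the limiting normal cone to K at the origin: N̂(x̄; K) ⊆ N(0; K). -/
open scoped RealInnerProductSpace Topology ENNReal
open Filter MeasureTheory

/-- The dilation `y ↦ t • y` maps the cone `K` onto itself and turns `y - x` into `y - t • x`. -/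
lemma RegNormal.smul_of_isConeSet {n : ℕ} {K : Set (En n)} (hK : IsConeSet K) {x v : En n}
    (hv : RegNormal K x v) {t : ℝ} (ht : 0 < t) : RegNormal K (t • x) v := by
  intro ε hε
  obtain ⟨δ, hδ, hnear⟩ := hv ε hε
  refine ⟨t * δ, mul_pos ht hδ, fun y hy hyδ => ?_⟩
  have hdiff : y - t • x = t • (t⁻¹ • y - x) := by
    rw [smul_sub, smul_inv_smul₀ ht.ne']
  have hnorm : ‖y - t • x‖ = t * ‖t⁻¹ • y - x‖ := by
    rw [hdiff, norm_smul, Real.norm_of_nonneg ht.le]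
  have hclose : ‖t⁻¹ • y - x‖ < δ := lt_of_mul_lt_mul_left (hnorm ▸ hyδ) ht.le
  calc ⟪v, y - t • x⟫ = t * ⟪v, t⁻¹ • y - x⟫ := by rw [hdiff, real_inner_smul_right]
    _ ≤ t * (ε * ‖t⁻¹ • y - x‖) :=
        mul_le_mul_of_nonneg_left (hnear _ (hK y hy _ (inv_nonneg.2 ht.le)) hclose) ht.le
    _ = ε * ‖y - t • x‖ := by rw [hnorm]; ring

theorem regular_normal_cone_subset_limiting_normal_cone_at_zero_general {n : ℕ}
    (K : Set (En n)) (hKcone : IsConeSet K)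
    (xbar : En n) (hx : xbar ∈ K) :
    RegNCone K xbar ⊆ LimNCone K 0 := by
  intro v hv
  -- `v` stays a regular normal along the ray `t • xbar`, which reaches `0` as `t → 0⁺`.
  have hpos : ∀ k : ℕ, (0 : ℝ) < 1 / ((k : ℝ) + 1) := fun k => by positivity
  have hlim : Tendsto (fun k : ℕ => (1 / ((k : ℝ) + 1)) • xbar) atTop (𝓝 0) := by
    simpa using (tendsto_one_div_add_atTop_nhds_zero_nat (𝕜 := ℝ)).smul_const xbar
  exact ⟨fun k => (1 / ((k : ℝ) + 1)) • xbar, fun _ => v,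
    fun k => hKcone xbar hx _ (hpos k).le, fun k => hv.smul_of_isConeSet hKcone (hpos k),
    hlim, tendsto_const_nhds⟩

/-- for a closed cone `K` and `x̄ ∈ K`, `N̂(x̄;K) ⊆ N(0;K)`. -/
theorem regular_normal_cone_subset_limiting_normal_cone_at_zero {n : ℕ}
    (K : Set (En n)) (hKne : K.Nonempty) (hKcl : IsClosed K) (hKcone : IsConeSet K)
    (xbar : En n) (hx : xbar ∈ K) :
    RegNCone K xbar ⊆ LimNCone K 0 :=
  regular_normal_cone_subset_limiting_normal_cone_at_zero_general K hKcone xbar hx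
end

section
/- Let {Θ_t}_{t∈T} be a family of closed subsets of ℝⁿ containing a common point x̄, and suppose there exists an open neighborhood U of 0 such that T(x̄; Θ_t) ∩ U ⊆ Θ_t − x̄ for all t ∈ T (uniform tangential stability). Then the contingent (Bouligand) tangent cone satisfies T(x̄; ⋂_{t∈T} Θ_t) = ⋂_{t∈T} T(x̄; Θ_t). -/
open scoped RealInnerProductSpace Topology ENNReal
open Filter MeasureTheory

lemma tanCone_smul_mem {n : ℕ} {Θ : Set (En n)} {x v : En n}
    (hv : v ∈ TanCone Θ x) {l : ℝ} (hl : 0 < l) : l • v ∈ TanCone Θ x := by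
  obtain ⟨τ, vs, hτ, hτ0, hvs, hmem⟩ := hv
  refine ⟨fun k => τ k / l, fun k => l • vs k, fun k => div_pos (hτ k) hl, ?_, ?_, ?_⟩
  · simpa using hτ0.div_const l
  · exact hvs.const_smul l
  · intro k
    have : (τ k / l) • (l • vs k) = τ k • vs k := by
      rw [smul_smul, div_mul_cancel₀ _ hl.ne']
    rw [this]; exact hmem k

/-- uniform tangential stability implies CHIP. -/
theorem chip_of_uniform_tangential_stability {n : ℕ} {T : Type*}
    (Θ : T → Set (En n)) (hcl : ∀ t, IsClosed (Θ t)) (xbar : En n)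
    (hx : ∀ t, xbar ∈ Θ t)
    (hstab : ∃ U : Set (En n), IsOpen U ∧ (0 : En n) ∈ U ∧
      ∀ t, TanCone (Θ t) xbar ∩ U ⊆ {w | xbar + w ∈ Θ t}) :
    TanCone (⋂ t, Θ t) xbar = ⋂ t, TanCone (Θ t) xbar := by
  obtain ⟨U, hUo, hU0, hstab⟩ := hstab
  apply Set.Subset.antisymm
  · intro v hv
    obtain ⟨τ, vs, hτ, hτ0, hvs, hmem⟩ := hv
    refine Set.mem_iInter.2 fun t => ⟨τ, vs, hτ, hτ0, hvs, fun k => ?_⟩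
    exact Set.mem_iInter.1 (hmem k) t
  · intro v hv
    rw [Set.mem_iInter] at hv
    obtain ⟨ε, hε, hball⟩ := Metric.isOpen_iff.1 hUo 0 hU0
    set c : ℝ := ε / (2 * (‖v‖ + 1)) with hc
    have hnorm1 : (0:ℝ) < ‖v‖ + 1 := by positivity
    have hcpos : 0 < c := by positivity
    refine ⟨fun k => c / (k + 1), fun _ => v, fun k => by positivity, ?_, tendsto_const_nhds, ?_⟩
    · exact by have := (tendsto_const_div_atTop_nhds_zero_nat c).comp (tendsto_add_atTop_nat 1); simpa [Function.comp_def] using this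
    · intro k
      rw [Set.mem_iInter]
      intro t
      have hle : c / (k + 1) ≤ c := by
        rw [div_le_iff₀ (by positivity)]
        nlinarith [hcpos, (Nat.cast_nonneg k : (0:ℝ) ≤ k)]
      have hU : (c / (k + 1)) • v ∈ U := by
        apply hball
        rw [Metric.mem_ball, dist_zero_right, norm_smul, Real.norm_eq_abs,
          abs_of_pos (by positivity)]
        have h1 : (c / (k + 1)) * ‖v‖ ≤ c * ‖v‖ :=
          mul_le_mul_of_nonneg_right hle (norm_nonneg v)
        have h2 : c * ‖v‖ < ε := by
          rw [hc, div_mul_eq_mul_div, div_lt_iff₀ (by positivity)]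
          nlinarith [norm_nonneg v, hε]
        linarith
      exact hstab t ⟨tanCone_smul_mem (hv t) (by positivity), hU⟩
end

section
/- Let T be an index set, a: T → ℝⁿ and b: T → ℝ functions, and Θ_t = { x ∈ ℝⁿ : ⟨a(t), x⟩ − b(t) ≤ 0 }. Let x̄ satisfy ⟨a(t), x̄⟩ ≤ b(t) for all t, let T_f = { t : ⟨a(t), x̄⟩ = b(t) }, and assume x̄ lies in the interior of ⋂_{t∉T_f} { x : ⟨a(t), x⟩ < b(t) }. Then T(x̄; ⋂_{t∈T} Θ_t) = ⋂_{t∈T} T(x̄; Θ_t). -/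
open scoped RealInnerProductSpace Topology ENNReal
open Filter MeasureTheory

/-- CHIP for infinite linear inequality systems. -/
theorem chip_for_linear_inequality_system {n : ℕ} {T : Type*}
    (a : T → En n) (b : T → ℝ) (xbar : En n)
    (hfeas : ∀ t, ⟪a t, xbar⟫ ≤ b t)
    (hint : xbar ∈ interior (⋂ t ∈ {t : T | ⟪a t, xbar⟫ ≠ b t},
      {x : En n | ⟪a t, x⟫ < b t})) :
    TanCone (⋂ t, {x : En n | ⟪a t, x⟫ ≤ b t}) xbar
      = ⋂ t, TanCone {x : En n | ⟪a t, x⟫ ≤ b t} xbar := by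
  ext v
  simp only [Set.mem_iInter]
  constructor
  · rintro ⟨τ, vs, hτ, hτ0, hvs, hmem⟩ t
    exact ⟨τ, vs, hτ, hτ0, hvs, fun k => Set.mem_iInter.mp (hmem k) t⟩
  · intro hv
    have hact : ∀ t, ⟪a t, xbar⟫ = b t → ⟪a t, v⟫ ≤ 0 := by
      intro t ht
      obtain ⟨τ, vs, hτ, hτ0, hvs, hmem⟩ := hv t
      have hk : ∀ k, ⟪a t, vs k⟫ ≤ 0 := by
        intro k
        have h := hmem k
        simp only [Set.mem_setOf_eq, inner_add_right, real_inner_smul_right] at h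
        nlinarith [hτ k]
      have hten : Tendsto (fun k => ⟪a t, vs k⟫) atTop (𝓝 ⟪a t, v⟫) :=
        ((continuous_const.inner continuous_id).continuousAt.tendsto.comp hvs)
      exact le_of_tendsto hten (Filter.Eventually.of_forall hk)
    obtain ⟨ε, hε, hball⟩ := Metric.isOpen_iff.mp isOpen_interior xbar hint
    have hball' : Metric.ball xbar ε ⊆
        ⋂ t ∈ {t : T | ⟪a t, xbar⟫ ≠ b t}, {x : En n | ⟪a t, x⟫ < b t} :=
      hball.trans interior_subset
    set c := ε / (2 * (‖v‖ + 1)) with hc_def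
    have hc : 0 < c := by positivity
    refine ⟨fun k => c / (k + 1), fun _ => v, fun k => by positivity, ?_,
      tendsto_const_nhds, ?_⟩
    · have h1 : Tendsto (fun k : ℕ => ((k : ℝ) + 1)) atTop atTop :=
        tendsto_atTop_add_const_right _ 1 tendsto_natCast_atTop_atTop
      exact Tendsto.div_atTop tendsto_const_nhds h1
    · intro k
      have hτk : 0 < c / ((k : ℝ) + 1) := by positivity
      have hτle : c / ((k : ℝ) + 1) ≤ c := by
        rw [div_le_iff₀ (by positivity)]
        nlinarith [Nat.cast_nonneg (α := ℝ) k]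
      refine Set.mem_iInter.mpr fun t => ?_
      by_cases ht : ⟪a t, xbar⟫ = b t
      · have := hact t ht
        simp only [Set.mem_setOf_eq, inner_add_right, real_inner_smul_right]
        nlinarith [hτk]
      · have hmemball : xbar + (c / ((k : ℝ) + 1)) • v ∈ Metric.ball xbar ε := by
          rw [Metric.mem_ball, dist_eq_norm]
          have : xbar + (c / ((k : ℝ) + 1)) • v - xbar = (c / ((k : ℝ) + 1)) • v := by
            abel
          rw [this, norm_smul, Real.norm_eq_abs, abs_of_pos hτk]
          have h2 : c * ‖v‖ < ε := by
            rw [hc_def]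
            rw [div_mul_eq_mul_div, div_lt_iff₀ (by positivity)]
            nlinarith [norm_nonneg v]
          calc c / ((k : ℝ) + 1) * ‖v‖ ≤ c * ‖v‖ :=
                mul_le_mul_of_nonneg_right hτle (norm_nonneg v)
            _ < ε := h2
        have h3 : ⟪a t, xbar + (c / ((k : ℝ) + 1)) • v⟫ < b t :=
          Set.mem_iInter₂.mp (hball' hmemball) t ht
        exact h3.le
end

section
/- Let (Ω, 𝒜, μ) be a measure space and M: Ω ⇉ ℝⁿ a measurable multifunction with closed values, with x̄ ∈ M_∩. Then for any integrable selection x*: Ω → ℝⁿ with x*(ω) ∈ N̂(x̄; M(ω)) a.e. (regular normal cone), the vector ∫_Ω x*(ω) dμ(ω) belongs to the regular normal cone N̂(x̄; M_∩) of the essential intersection, i.e., ∫_Ω N̂(x̄; M(ω)) dμ(ω) ⊆ N̂(x̄; M_∩). -/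
open scoped RealInnerProductSpace Topology ENNReal
open Filter MeasureTheory

/-- integrals of integrable selections of regular normal cones
are regular normals to the essential intersection. -/
theorem integral_of_regular_normal_selection_mem_regular_normal_cone {Ω : Type*}
    [MeasurableSpace Ω] (μ : Measure Ω) {n : ℕ} (M : Ω → Set (En n))
    (hMmeas : MeasMulti M) (hMcl : ∀ ω, IsClosed (M ω))
    (xbar : En n) (hxbar : xbar ∈ Minter μ M)
    (xstar : Ω → En n) (hint : Integrable xstar μ)
    (hsel : ∀ᵐ ω ∂μ, xstar ω ∈ RegNCone (M ω) xbar) :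
    (∫ ω, xstar ω ∂μ) ∈ RegNCone (Minter μ M) xbar := by
  set v : En n := ∫ ω, xstar ω ∂μ with hv
  simp only [RegNCone, Set.mem_setOf_eq, RegNormal]
  intro ε hε
  by_contra hcon
  push_neg at hcon
  -- Extract a bad sequence converging to `xbar`.
  have H : ∀ k : ℕ, ∃ y, y ∈ Minter μ M ∧ ‖y - xbar‖ < 1 / (k + 1) ∧
      ε * ‖y - xbar‖ < ⟪v, y - xbar⟫ := by
    intro k
    obtain ⟨y, hy1, hy2, hy3⟩ := hcon (1 / (k + 1)) (by positivity)
    exact ⟨y, hy1, hy2, hy3⟩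
  choose y hy1 hy2 hy3 using H
  have hpos : ∀ k, 0 < ‖y k - xbar‖ := by
    intro k
    rcases (norm_nonneg (y k - xbar)).lt_or_eq with h | h
    · exact h
    · exfalso
      have h0 : y k - xbar = 0 := norm_eq_zero.mp h.symm
      have := hy3 k
      rw [h0] at this
      simp at this
  -- The normalized directions.
  set u : ℕ → En n := fun k => (‖y k - xbar‖)⁻¹ • (y k - xbar) with hu
  have hunorm : ∀ k, ‖u k‖ = 1 := by
    intro k
    rw [hu]
    simp only [norm_smul, norm_inv, norm_norm]
    exact inv_mul_cancel₀ (hpos k).ne'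
  have hvu : ∀ k, ε < ⟪v, u k⟫ := by
    intro k
    have h1 : ⟪v, u k⟫ = (‖y k - xbar‖)⁻¹ * ⟪v, y k - xbar⟫ := by
      rw [hu]; exact real_inner_smul_right v _ _
    rw [h1]
    rw [lt_inv_mul_iff₀ (hpos k)]
    linarith [hy3 k, mul_comm ε ‖y k - xbar‖]
  -- The integrand sequence and its properties.
  have hxm : AEMeasurable xstar μ := hint.aemeasurable
  set p : ℕ → Ω → ℝ := fun k ω => ‖xstar ω‖ - ⟪xstar ω, u k⟫ with hp
  have hp0 : ∀ k ω, 0 ≤ p k ω := by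
    intro k ω
    have := real_inner_le_norm (xstar ω) (u k)
    rw [hunorm k, mul_one] at this
    simp only [hp, sub_nonneg]; exact this
  have hfint : ∀ k, Integrable (fun ω => ⟪xstar ω, u k⟫) μ :=
    fun k => hint.inner_const (u k)
  have hpint : ∀ k, Integrable (p k) μ := fun k => hint.norm.sub (hfint k)
  have hfi : ∀ k, (∫ ω, ⟪xstar ω, u k⟫ ∂μ) = ⟪v, u k⟫ := by
    intro k
    have : (∫ ω, ⟪xstar ω, u k⟫ ∂μ) = ∫ ω, ⟪u k, xstar ω⟫ ∂μ := by
      congr 1; funext ω; exact real_inner_comm _ _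
    rw [this, integral_inner hint, real_inner_comm]
  set A : ℝ := ∫ ω, ‖xstar ω‖ ∂μ with hA
  have hpi : ∀ k, (∫ ω, p k ω ∂μ) = A - ⟪v, u k⟫ := by
    intro k
    rw [hp]
    rw [integral_sub hint.norm (hfint k), hfi k]
  -- The ENNReal-valued sequence.
  set P : ℕ → Ω → ℝ≥0∞ := fun k ω => ENNReal.ofReal (p k ω) with hP
  have hPmeas : ∀ k, AEMeasurable (P k) μ := by
    intro k
    have hc : Continuous fun z : En n => ENNReal.ofReal (‖z‖ - ⟪z, u k⟫) := by
      apply ENNReal.continuous_ofReal.comp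
      exact continuous_norm.sub (continuous_id.inner continuous_const)
    exact hc.measurable.comp_aemeasurable hxm
  -- Pointwise liminf estimate via the regular-normal property.
  have hae : ∀ᵐ ω ∂μ, ENNReal.ofReal ‖xstar ω‖ ≤ Filter.liminf (fun k => P k ω) atTop := by
    filter_upwards [hsel, ae_all_iff.mpr hy1] with ω hω1 hω2
    rw [Filter.le_liminf_iff]
    intro b hb
    obtain ⟨c, hbc, hc⟩ := exists_between hb
    have hcne : c ≠ ⊤ := hc.ne_top
    have hct : c.toReal < ‖xstar ω‖ := by
      have := (ENNReal.lt_ofReal_iff_toReal_lt hcne).mp hc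
      exact this
    have hε' : (0:ℝ) < ‖xstar ω‖ - c.toReal := by linarith
    obtain ⟨δ, hδ, hδ'⟩ := hω1 (‖xstar ω‖ - c.toReal) hε'
    have htend : Tendsto (fun k : ℕ => ‖y k - xbar‖) atTop (𝓝 0) := by
      apply squeeze_zero (fun k => norm_nonneg _) (fun k => (hy2 k).le)
      exact tendsto_one_div_add_atTop_nhds_zero_nat
    have hev : ∀ᶠ k in atTop, ‖y k - xbar‖ < δ :=
      htend.eventually (eventually_lt_nhds hδ)
    filter_upwards [hev] with k hk
    have hineq := hδ' (y k) (hω2 k) hk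
    have hfk : ⟪xstar ω, u k⟫ ≤ ‖xstar ω‖ - c.toReal := by
      have h1 : ⟪xstar ω, u k⟫ = (‖y k - xbar‖)⁻¹ * ⟪xstar ω, y k - xbar⟫ := by
        rw [hu]; exact real_inner_smul_right _ _ _
      rw [h1, inv_mul_le_iff₀ (hpos k)]
      linarith [mul_comm (‖xstar ω‖ - c.toReal) ‖y k - xbar‖]
    have hpk : c.toReal ≤ p k ω := by simp only [hp]; linarith
    calc b < c := hbc
      _ = ENNReal.ofReal c.toReal := (ENNReal.ofReal_toReal hcne).symm
      _ ≤ P k ω := ENNReal.ofReal_le_ofReal hpk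
  -- Fatou's lemma chain.
  have h1 : (∫⁻ ω, ENNReal.ofReal ‖xstar ω‖ ∂μ) ≤
      ∫⁻ ω, Filter.liminf (fun k => P k ω) atTop ∂μ := lintegral_mono_ae hae
  have h2 : (∫⁻ ω, Filter.liminf (fun k => P k ω) atTop ∂μ) ≤
      Filter.liminf (fun k => ∫⁻ ω, P k ω ∂μ) atTop := lintegral_liminf_le' hPmeas
  have h3 : ∀ k, (∫⁻ ω, P k ω ∂μ) ≤ ENNReal.ofReal (A - ε) := by
    intro k
    have := ofReal_integral_eq_lintegral_ofReal (hpint k)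
      (Filter.Eventually.of_forall (hp0 k))
    rw [hP, ← this, hpi k]
    exact ENNReal.ofReal_le_ofReal (by linarith [hvu k])
  have h4 : Filter.liminf (fun k => ∫⁻ ω, P k ω ∂μ) atTop ≤ ENNReal.ofReal (A - ε) := by
    have := Filter.liminf_le_liminf (Filter.Eventually.of_forall h3)
      (f := atTop) (u := fun k => ∫⁻ ω, P k ω ∂μ) (v := fun _ => ENNReal.ofReal (A - ε))
    rwa [Filter.liminf_const] at this
  have h5 : ENNReal.ofReal A = ∫⁻ ω, ENNReal.ofReal ‖xstar ω‖ ∂μ :=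
    ofReal_integral_eq_lintegral_ofReal hint.norm
      (Filter.Eventually.of_forall fun ω => norm_nonneg _)
  have hfinal : ENNReal.ofReal A ≤ ENNReal.ofReal (A - ε) := by
    rw [h5]; exact le_trans h1 (le_trans h2 h4)
  -- Derive a contradiction.
  have hεA : ε < A := by
    have h6 : (∫ ω, ⟪xstar ω, u 0⟫ ∂μ) ≤ A := by
      rw [hA]
      apply integral_mono (hfint 0) hint.norm
      intro ω
      have := real_inner_le_norm (xstar ω) (u 0)
      rw [hunorm 0, mul_one] at this
      exact this
    calc ε < ⟪v, u 0⟫ := hvu 0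
      _ = ∫ ω, ⟪xstar ω, u 0⟫ ∂μ := (hfi 0).symm
      _ ≤ A := h6
  rcases ENNReal.ofReal_le_ofReal_iff'.mp hfinal with h | h
  · linarith
  · linarith
end
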